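/- Let X be a vector field on an Egorov space (ℝ^{n+2}, g_f) with components (X_u, X_v, X_1, …, X_n) in the coordinate frame. Then L_X g_f + Ric = λ g_f holds if and only if the following system is satisfied: ∂ᵢX_j + ∂_jXᵢ = 0 for 1 ≤ i ≠ j ≤ n; ∂ᵢX_v + f ∂_uXᵢ = 0; ∂ᵢX_u + f ∂_vXᵢ = 0; X_u f' + 2f ∂ᵢXᵢ = λ f for each i; Ric_{uu} + 2∂_uX_v = 0; ∂_uX_u + ∂_vX_v = λ; and ∂_vX_u = 0. -/

import Mathlib

noncomputable section

/-- A point of `ℝ^{n+2}`, written `(u, v, x)`. -/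
abbrev Pt (n : ℕ) : Type := ℝ × ℝ × (Fin n → ℝ)

/-- The `k`-th coordinate direction in `ℝ^{n+2}` (`k = 0` is `∂_u`, `k = 1` is `∂_v`,
`k = i + 2` is `∂_{x_i}`). -/
def cdir (n : ℕ) (k : Fin (n + 2)) : Pt n :=
  if (k : ℕ) = 0 then (1, 0, 0)
  else if (k : ℕ) = 1 then (0, 1, 0)
  else (0, 0, fun i => if (i : ℕ) + 2 = (k : ℕ) then 1 else 0)

/-- Partial derivative along the `k`-th coordinate direction. -/
def pd {n : ℕ} (k : Fin (n + 2)) (F : Pt n → ℝ) (p : Pt n) : ℝ :=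
  fderiv ℝ F p (cdir n k)

/-- The `x`-coordinate of `p` associated to an index `k` with `2 ≤ k`. -/
def xc {n : ℕ} (p : Pt n) (k : Fin (n + 2)) : ℝ :=
  if h : 2 ≤ (k : ℕ) then p.2.2 ⟨(k : ℕ) - 2, by have := k.isLt; omega⟩ else 0

/-- The Egorov metric `g_f = du dv + f(u) Σᵢ (dxᵢ)²` on `ℝ^{n+2}`. -/
def gE {n : ℕ} (f : ℝ → ℝ) (p : Pt n) (k l : Fin (n + 2)) : ℝ :=
  if ((k : ℕ) = 0 ∧ (l : ℕ) = 1) ∨ ((k : ℕ) = 1 ∧ (l : ℕ) = 0) then 1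
  else if k = l ∧ 2 ≤ (k : ℕ) then f p.1 else 0

/-- The inverse of the Egorov metric. -/
def gEinv {n : ℕ} (f : ℝ → ℝ) (p : Pt n) (k l : Fin (n + 2)) : ℝ :=
  if ((k : ℕ) = 0 ∧ (l : ℕ) = 1) ∨ ((k : ℕ) = 1 ∧ (l : ℕ) = 0) then 1
  else if k = l ∧ 2 ≤ (k : ℕ) then 1 / f p.1 else 0

/-- Christoffel symbols `Γ^k_{ij}` of the Levi-Civita connection of `g_f`. -/
def ΓE {n : ℕ} (f : ℝ → ℝ) (p : Pt n) (k i j : Fin (n + 2)) : ℝ :=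
  (1 / 2) * ∑ l, gEinv f p k l *
    (pd i (fun q => gE f q l j) p + pd j (fun q => gE f q l i) p
      - pd l (fun q => gE f q i j) p)

/-- Component `l` of `R(∂_i, ∂_j) ∂_k`, where `R(X,Y) = ∇_{[X,Y]} - [∇_X, ∇_Y]`. -/
def RE {n : ℕ} (f : ℝ → ℝ) (p : Pt n) (l i j k : Fin (n + 2)) : ℝ :=
  -(pd i (fun q => ΓE f q l j k) p - pd j (fun q => ΓE f q l i k) p
    + ∑ m, (ΓE f p l i m * ΓE f p m j k - ΓE f p l j m * ΓE f p m i k))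

/-- Ricci tensor of `g_f`: `Ric(X,Y) = trace (Z ↦ R(X,Z)Y)`. -/
def RicE {n : ℕ} (f : ℝ → ℝ) (p : Pt n) (i j : Fin (n + 2)) : ℝ :=
  ∑ k, RE f p k i k j

/-- The function `Ric_uu = (n/(4f²)) ((f')² - 2 f f'')`. -/
def RicuuE (n : ℕ) (f : ℝ → ℝ) (u : ℝ) : ℝ :=
  ((n : ℝ) / (4 * f u ^ 2)) * ((deriv f u) ^ 2 - 2 * f u * deriv (deriv f) u)

/-- Lie derivative of `g_f` along a vector field with components `X`. -/
def lieE {n : ℕ} (f : ℝ → ℝ) (X : Pt n → Fin (n + 2) → ℝ) (p : Pt n)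
    (i j : Fin (n + 2)) : ℝ :=
  ∑ k, (X p k * pd k (fun q => gE f q i j) p
    + gE f p k j * pd i (fun q => X q k) p
    + gE f p i k * pd j (fun q => X q k) p)

/-- Hessian `Hess_h(∂_i, ∂_j)` with respect to the Levi-Civita connection of `g_f`. -/
def hessE {n : ℕ} (f : ℝ → ℝ) (h : Pt n → ℝ) (p : Pt n) (i j : Fin (n + 2)) : ℝ :=
  pd i (fun q => pd j h q) p - ∑ k, ΓE f p k i j * pd k h p

/-- Components of the gradient of `h` with respect to `g_f`. -/
def gradE {n : ℕ} (f : ℝ → ℝ) (h : Pt n → ℝ) (p : Pt n) (k : Fin (n + 2)) : ℝ :=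
  ∑ l, gEinv f p k l * pd l h p

/-- Component `k` of the covariant derivative `∇_{∂_i} X` for `g_f`. -/
def covE {n : ℕ} (f : ℝ → ℝ) (X : Pt n → Fin (n + 2) → ℝ) (p : Pt n)
    (i k : Fin (n + 2)) : ℝ :=
  pd i (fun q => X q k) p + ∑ j, ΓE f p k i j * X p j

/-- The Ricci operator of `g_f`, `g(QX, Y) = Ric(X, Y)`. -/
def QE {n : ℕ} (f : ℝ → ℝ) (p : Pt n) (k i : Fin (n + 2)) : ℝ :=
  ∑ j, gEinv f p k j * RicE f p j i



section helpers
variable {n : ℕ} {f : ℝ → ℝ}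

lemma cdir_fst (k : Fin (n+2)) : (cdir n k).1 = if (k : ℕ) = 0 then 1 else 0 := by
  unfold cdir; split_ifs with h1 h2 <;> simp_all

lemma pd_const (k : Fin (n+2)) (c : ℝ) (p : Pt n) : pd k (fun _ => c) p = 0 := by
  simp [pd]

lemma pd_fst (φ : ℝ → ℝ) (p : Pt n) (k : Fin (n+2)) (hφ : DifferentiableAt ℝ φ p.1) :
    pd k (fun q => φ q.1) p = if (k : ℕ) = 0 then deriv φ p.1 else 0 := by
  have h : (fun q : Pt n => φ q.1) = φ ∘ Prod.fst := rfl
  rw [pd, h, fderiv_comp p hφ differentiableAt_fst]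
  simp only [ContinuousLinearMap.comp_apply, fderiv_fst, ContinuousLinearMap.coe_fst', cdir_fst]
  split_ifs
  · exact fderiv_apply_one_eq_deriv
  · exact (fderiv ℝ φ p.1).map_zero

end helpers

section helpers2
variable {n : ℕ} {f : ℝ → ℝ}

lemma pd_gE (hf : Differentiable ℝ f) (p : Pt n) (k i j : Fin (n+2)) :
    pd k (fun q => gE f q i j) p
      = if i = j ∧ 2 ≤ (i : ℕ) then (if (k : ℕ) = 0 then deriv f p.1 else 0) else 0 := by
  by_cases h : i = j ∧ 2 ≤ (i : ℕ)
  · have hfun : (fun q : Pt n => gE f q i j) = fun q => f q.1 := by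
      funext q
      unfold gE
      rw [if_neg (by omega), if_pos h]
    rw [hfun, pd_fst f p k (hf p.1), if_pos h]
  · have hfun : (fun q : Pt n => gE f q i j)
        = fun _ => if ((i : ℕ) = 0 ∧ (j : ℕ) = 1) ∨ ((i : ℕ) = 1 ∧ (j : ℕ) = 0) then (1:ℝ) else 0 := by
      funext q
      unfold gE
      rw [if_neg h]
    rw [hfun, pd_const, if_neg h]

lemma sum_single {N : ℕ} (F : Fin N → ℝ) (l₀ : Fin N) (h : ∀ l, l ≠ l₀ → F l = 0) :
    ∑ l, F l = F l₀ :=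
  Finset.sum_eq_single_of_mem l₀ (Finset.mem_univ _) (fun b _ hb => h b hb)

lemma sum_zero_all {N : ℕ} (F : Fin N → ℝ) (h : ∀ l, F l = 0) : ∑ l, F l = 0 := by
  simp [h]

lemma sum_classes (F : Fin (n+2) → ℝ) (a b c : ℝ) (h0 : ∀ l : Fin (n+2), (l : ℕ) = 0 → F l = a)
    (h1 : ∀ l : Fin (n+2), (l : ℕ) = 1 → F l = b)
    (h2 : ∀ l : Fin (n+2), 2 ≤ (l : ℕ) → F l = c) :
    ∑ l, F l = a + b + n * c := by
  rw [Fin.sum_univ_succ, Fin.sum_univ_succ]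
  have e0 : F 0 = a := h0 0 rfl
  have e1 : F (Fin.succ 0) = b := h1 _ rfl
  have e2 : ∀ i : Fin n, F (Fin.succ (Fin.succ i)) = c := fun i => h2 _ (by simp)
  rw [e0, e1]
  rw [Finset.sum_congr rfl (fun i _ => e2 i), Finset.sum_const]
  simp [add_assoc, mul_comm]

lemma sum_three_mem (F : Fin (n+2) → ℝ) (t : Fin (n+2)) (ht : 2 ≤ (t : ℕ))
    (h : ∀ l, l ≠ 0 → l ≠ 1 → l ≠ t → F l = 0) :
    ∑ l, F l = F 0 + F 1 + F t := by
  have h01 : (0 : Fin (n+2)) ≠ 1 := by simp [Fin.ext_iff]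
  have h0t : (0 : Fin (n+2)) ≠ t := by simp [Fin.ext_iff]; omega
  have h1t : (1 : Fin (n+2)) ≠ t := by simp [Fin.ext_iff]; omega
  have hsub : ∑ l, F l = ∑ l ∈ ({0, 1, t} : Finset (Fin (n+2))), F l := by
    refine (Finset.sum_subset (Finset.subset_univ _) ?_).symm
    intro x _ hx
    simp only [Finset.mem_insert, Finset.mem_singleton, not_or] at hx
    exact h x hx.1 hx.2.1 hx.2.2
  rw [hsub, Finset.sum_insert (by simp [h01, h0t]), Finset.sum_insert (by simp [h1t]),
    Finset.sum_singleton, add_assoc]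

end helpers2

section helpers3
variable {n : ℕ} {f : ℝ → ℝ}

/-- the partner index: `sig 0 = 1`, `sig 1 = 0`, `sig k = k` for `k ≥ 2`. -/
def sig {n : ℕ} (k : Fin (n+2)) : Fin (n+2) :=
  if (k : ℕ) = 0 then 1 else if (k : ℕ) = 1 then 0 else k

lemma sig_val (k : Fin (n+2)) :
    ((sig k : Fin (n+2)) : ℕ) = if (k:ℕ) = 0 then 1 else if (k:ℕ) = 1 then 0 else (k:ℕ) := by
  unfold sig; split_ifs <;> simp

lemma gEinv_off (p : Pt n) (k l : Fin (n+2)) (h : l ≠ sig k) : gEinv f p k l = 0 := by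
  have hv : (l:ℕ) ≠ ((sig k : Fin (n+2)) : ℕ) := fun e => h (Fin.ext e)
  rw [sig_val] at hv
  unfold gEinv
  rw [if_neg (by split_ifs at hv <;> omega), if_neg (by
    rintro ⟨rfl, h2⟩; split_ifs at hv <;> omega)]

lemma gE_off (p : Pt n) (k l : Fin (n+2)) (h : l ≠ sig k) : gE f p k l = 0 := by
  have hv : (l:ℕ) ≠ ((sig k : Fin (n+2)) : ℕ) := fun e => h (Fin.ext e)
  rw [sig_val] at hv
  unfold gE
  rw [if_neg (by split_ifs at hv <;> omega), if_neg (by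
    rintro ⟨rfl, h2⟩; split_ifs at hv <;> omega)]

lemma gE_off' (p : Pt n) (k l : Fin (n+2)) (h : k ≠ sig l) : gE f p k l = 0 := by
  have hv : (k:ℕ) ≠ ((sig l : Fin (n+2)) : ℕ) := fun e => h (Fin.ext e)
  rw [sig_val] at hv
  unfold gE
  rw [if_neg (by split_ifs at hv <;> omega), if_neg (by
    rintro ⟨rfl, h2⟩; split_ifs at hv <;> omega)]

lemma gEinv_sig (p : Pt n) (k : Fin (n+2)) :
    gEinv f p k (sig k) = if 2 ≤ (k:ℕ) then 1 / f p.1 else 1 := by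
  by_cases h0 : (k:ℕ) = 0
  · simp only [sig, if_pos h0]
    unfold gEinv
    rw [if_pos (Or.inl ⟨h0, by simp⟩), if_neg (by omega)]
  · by_cases h1 : (k:ℕ) = 1
    · simp only [sig, if_neg h0, if_pos h1]
      unfold gEinv
      rw [if_pos (Or.inr ⟨h1, by simp⟩), if_neg (by omega)]
    · simp only [sig, if_neg h0, if_neg h1]
      unfold gEinv
      rw [if_neg (by omega), if_pos ⟨rfl, by omega⟩, if_pos (by omega)]

lemma gE_sig (p : Pt n) (k : Fin (n+2)) :
    gE f p k (sig k) = if 2 ≤ (k:ℕ) then f p.1 else 1 := by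
  by_cases h0 : (k:ℕ) = 0
  · simp only [sig, if_pos h0]
    unfold gE
    rw [if_pos (Or.inl ⟨h0, by simp⟩), if_neg (by omega)]
  · by_cases h1 : (k:ℕ) = 1
    · simp only [sig, if_neg h0, if_pos h1]
      unfold gE
      rw [if_pos (Or.inr ⟨h1, by simp⟩), if_neg (by omega)]
    · simp only [sig, if_neg h0, if_neg h1]
      unfold gE
      rw [if_neg (by omega), if_pos ⟨rfl, by omega⟩, if_pos (by omega)]

lemma gE_sig' (p : Pt n) (l : Fin (n+2)) :
    gE f p (sig l) l = if 2 ≤ (l:ℕ) then f p.1 else 1 := by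
  by_cases h0 : (l:ℕ) = 0
  · simp only [sig, if_pos h0]
    unfold gE
    rw [if_pos (Or.inr ⟨by simp, h0⟩), if_neg (by omega)]
  · by_cases h1 : (l:ℕ) = 1
    · simp only [sig, if_neg h0, if_pos h1]
      unfold gE
      rw [if_pos (Or.inl ⟨by simp, h1⟩), if_neg (by omega)]
    · simp only [sig, if_neg h0, if_neg h1]
      unfold gE
      rw [if_neg (by omega), if_pos ⟨rfl, by omega⟩, if_pos (by omega)]

end helpers3

section gam
variable {n : ℕ} {f : ℝ → ℝ}

/-- closed form of the Christoffel symbols (conditions via `ℕ` values). -/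
def Gam {n : ℕ} (f : ℝ → ℝ) (u : ℝ) (k i j : Fin (n+2)) : ℝ :=
  if (k : ℕ) = 1 ∧ (i : ℕ) = (j : ℕ) ∧ 2 ≤ (i : ℕ) then -(deriv f u) / 2
  else if ((i : ℕ) = 0 ∧ (j : ℕ) = (k : ℕ) ∧ 2 ≤ (k : ℕ))
      ∨ ((j : ℕ) = 0 ∧ (i : ℕ) = (k : ℕ) ∧ 2 ≤ (k : ℕ)) then
    deriv f u / (2 * f u)
  else 0

set_option maxHeartbeats 2000000 in
lemma GamE_eq (hf : Differentiable ℝ f) (hpos : ∀ u, 0 < f u) (p : Pt n) (k i j : Fin (n+2)) :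
    ΓE f p k i j = Gam f p.1 k i j := by
  have hfne : f p.1 ≠ 0 := ne_of_gt (hpos p.1)
  unfold ΓE
  rw [Finset.sum_congr rfl (fun l _ => by
    rw [pd_gE hf, pd_gE hf, pd_gE hf])]
  rw [sum_single _ (sig k) (fun l hl => by rw [gEinv_off p k l hl, zero_mul])]
  rw [gEinv_sig]
  unfold Gam
  by_cases h0 : (k:ℕ) = 0
  · simp only [sig, if_pos h0]
    simp only [Fin.ext_iff, Fin.val_zero, Fin.val_one]
    split_ifs <;> first | contradiction | omega | ring
  · by_cases h1 : (k:ℕ) = 1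
    · simp only [sig, if_neg h0, if_pos h1]
      simp only [Fin.ext_iff, Fin.val_zero, Fin.val_one]
      split_ifs <;> first | contradiction | omega | ring
    · simp only [sig, if_neg h0, if_neg h1]
      simp only [Fin.ext_iff, Fin.val_zero, Fin.val_one]
      split_ifs <;> first | contradiction | omega | ring | (field_simp; try ring)

end gam

section gamderiv
variable {n : ℕ} {f : ℝ → ℝ}

lemma deriv_f_diff (hf : ContDiff ℝ (⊤ : ℕ∞) f) : Differentiable ℝ (deriv f) := by
  have h1 : ContDiff ℝ ((⊤ : ℕ∞) : WithTop ℕ∞) f := hf.of_le (by simp)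
  exact (contDiff_infty_iff_deriv.mp h1).2.differentiable (by simp)

lemma diff_Gam (hf : ContDiff ℝ (⊤ : ℕ∞) f) (hpos : ∀ u, 0 < f u) (k i j : Fin (n+2)) :
    Differentiable ℝ (fun u => Gam f u k i j) := by
  have hd := deriv_f_diff hf
  have hfd := hf.differentiable (by simp)
  unfold Gam
  split_ifs with h1 h2
  · exact (hd.neg).div_const 2
  · exact hd.div ((differentiable_const 2).mul hfd)
      (fun x => by have := hpos x; positivity)
  · exact differentiable_const 0

lemma pd_GamFn (hf : ContDiff ℝ (⊤ : ℕ∞) f) (hpos : ∀ u, 0 < f u) (p : Pt n)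
    (m k i j : Fin (n+2)) :
    pd m (fun q => ΓE f q k i j) p
      = if (m : ℕ) = 0 then deriv (fun u => Gam f u k i j) p.1 else 0 := by
  have hfun : (fun q : Pt n => ΓE f q k i j) = fun q => Gam f q.1 k i j :=
    funext fun q => GamE_eq (hf.differentiable (by simp)) hpos q k i j
  rw [hfun, pd_fst _ p m ((diff_Gam hf hpos k i j).differentiableAt)]

lemma Gam_zero (u : ℝ) {k i j : Fin (n+2)}
    (h1 : ¬((k : ℕ) = 1 ∧ (i : ℕ) = (j : ℕ) ∧ 2 ≤ (i : ℕ)))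
    (h2 : ¬(((i : ℕ) = 0 ∧ (j : ℕ) = (k : ℕ) ∧ 2 ≤ (k : ℕ))
      ∨ ((j : ℕ) = 0 ∧ (i : ℕ) = (k : ℕ) ∧ 2 ≤ (k : ℕ)))) :
    Gam f u k i j = 0 := by
  unfold Gam; rw [if_neg h1, if_neg h2]

lemma Gam_beta (u : ℝ) {k i j : Fin (n+2)}
    (h1 : (k : ℕ) = 1 ∧ (i : ℕ) = (j : ℕ) ∧ 2 ≤ (i : ℕ)) :
    Gam f u k i j = -(deriv f u) / 2 := by
  unfold Gam; rw [if_pos h1]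

lemma Gam_alpha (u : ℝ) {k i j : Fin (n+2)}
    (h1 : ¬((k : ℕ) = 1 ∧ (i : ℕ) = (j : ℕ) ∧ 2 ≤ (i : ℕ)))
    (h2 : ((i : ℕ) = 0 ∧ (j : ℕ) = (k : ℕ) ∧ 2 ≤ (k : ℕ))
      ∨ ((j : ℕ) = 0 ∧ (i : ℕ) = (k : ℕ) ∧ 2 ≤ (k : ℕ))) :
    Gam f u k i j = deriv f u / (2 * f u) := by
  unfold Gam; rw [if_neg h1, if_pos h2]

lemma dGam_zero (x : ℝ) {k i j : Fin (n+2)}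
    (h1 : ¬((k : ℕ) = 1 ∧ (i : ℕ) = (j : ℕ) ∧ 2 ≤ (i : ℕ)))
    (h2 : ¬(((i : ℕ) = 0 ∧ (j : ℕ) = (k : ℕ) ∧ 2 ≤ (k : ℕ))
      ∨ ((j : ℕ) = 0 ∧ (i : ℕ) = (k : ℕ) ∧ 2 ≤ (k : ℕ)))) :
    deriv (fun u => Gam f u k i j) x = 0 := by
  have : (fun u => Gam f u k i j) = fun _ => (0:ℝ) := funext fun u => Gam_zero u h1 h2
  rw [this, deriv_const]

lemma dGam_alpha (hf : ContDiff ℝ (⊤ : ℕ∞) f) (hpos : ∀ u, 0 < f u) (x : ℝ) {k i j : Fin (n+2)}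
    (h1 : ¬((k : ℕ) = 1 ∧ (i : ℕ) = (j : ℕ) ∧ 2 ≤ (i : ℕ)))
    (h2 : ((i : ℕ) = 0 ∧ (j : ℕ) = (k : ℕ) ∧ 2 ≤ (k : ℕ))
      ∨ ((j : ℕ) = 0 ∧ (i : ℕ) = (k : ℕ) ∧ 2 ≤ (k : ℕ))) :
    deriv (fun u => Gam f u k i j) x
      = (deriv (deriv f) x * (2 * f x) - deriv f x * (2 * deriv f x)) / (2 * f x)^2 := by
  have hd := deriv_f_diff hf
  have hfd := hf.differentiable (by simp)
  have : (fun u => Gam f u k i j) = fun u => deriv f u / (2 * f u) :=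
    funext fun u => Gam_alpha u h1 h2
  rw [this, deriv_fun_div (c := deriv f) (d := fun u => 2 * f u) (hd.differentiableAt) (((differentiable_const 2).mul hfd).differentiableAt)
    (by have := hpos x; positivity)]
  congr 1
  rw [deriv_const_mul 2 (hfd.differentiableAt)]

end gamderiv

section ricci
variable {n : ℕ} {f : ℝ → ℝ}

lemma val_ne_of_ne {N : ℕ} {a b : Fin N} (h : a ≠ b) : (a : ℕ) ≠ (b : ℕ) :=
  fun e => h (Fin.ext e)

lemma S2_eq (u : ℝ) (k i j : Fin (n+2)) :
    ∑ m, Gam f u k k m * Gam f u m i j = 0 := by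
  apply sum_zero_all
  intro m
  by_cases hm : (m : ℕ) = 0
  · rw [Gam_zero u (k := m) (by omega) (by omega), mul_zero]
  · rw [Gam_zero u (k := k) (i := k) (j := m) (by omega) (by omega), zero_mul]

lemma S1_eq (u : ℝ) (k i j : Fin (n+2)) :
    ∑ m, Gam f u k i m * Gam f u m k j
      = if (i : ℕ) = 0 ∧ (j : ℕ) = 0 ∧ 2 ≤ (k : ℕ) then (deriv f u / (2 * f u))^2 else 0 := by
  have h0 : ((0 : Fin (n+2)) : ℕ) = 0 := rfl
  have h1 : ((1 : Fin (n+2)) : ℕ) = 1 := rfl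
  by_cases hk : 2 ≤ (k : ℕ)
  · rw [sum_three_mem _ k hk (fun m hm0 hm1 hmk => by
      have e0 := val_ne_of_ne hm0
      have e1 := val_ne_of_ne hm1
      have ek := val_ne_of_ne hmk
      rw [h0] at e0; rw [h1] at e1
      rw [Gam_zero u (by omega) (by omega), zero_mul])]
    rw [Gam_zero u (k := (0 : Fin (n+2))) (i := k) (j := j) (by omega) (by omega), mul_zero]
    rw [Gam_zero u (k := k) (i := i) (j := (1 : Fin (n+2))) (by omega) (by omega), zero_mul]
    by_cases hi : (i : ℕ) = 0
    · rw [Gam_alpha u (k := k) (i := i) (j := k) (by omega) (Or.inl ⟨hi, rfl, hk⟩)]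
      by_cases hj : (j : ℕ) = 0
      · rw [Gam_alpha u (k := k) (i := k) (j := j) (by omega) (Or.inr ⟨hj, rfl, hk⟩),
          if_pos ⟨hi, hj, hk⟩]
        ring
      · rw [Gam_zero u (k := k) (i := k) (j := j) (by omega) (by omega),
          if_neg (by omega)]
        ring
    · rw [Gam_zero u (k := k) (i := i) (j := k) (by omega) (by omega), if_neg (by omega)]
      ring
  · rw [if_neg (by omega)]
    apply sum_zero_all
    intro m
    by_cases hm : (m : ℕ) = 0
    · rw [Gam_zero u (k := m) (by omega) (by omega), mul_zero]
    · by_cases hk1 : (k : ℕ) = 1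
      · by_cases him : (i : ℕ) = (m : ℕ) ∧ 2 ≤ (i : ℕ)
        · rw [Gam_zero u (k := m) (i := k) (j := j) (by omega) (by omega), mul_zero]
        · rw [Gam_zero u (k := k) (i := i) (j := m) (by omega) (by omega), zero_mul]
      · rw [Gam_zero u (k := k) (i := i) (j := m) (by omega) (by omega), zero_mul]

set_option maxHeartbeats 1000000 in
lemma RicE_eq (hf : ContDiff ℝ (⊤ : ℕ∞) f) (hpos : ∀ u, 0 < f u) (p : Pt n) (i j : Fin (n+2)) :
    RicE f p i j = if (i : ℕ) = 0 ∧ (j : ℕ) = 0 then RicuuE n f p.1 else 0 := by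
  have hfd := hf.differentiable (by simp)
  have hfne : f p.1 ≠ 0 := ne_of_gt (hpos p.1)
  have key : ∀ k : Fin (n+2), RE f p k i k j
      = if (i : ℕ) = 0 ∧ (j : ℕ) = 0 ∧ 2 ≤ (k : ℕ) then
          -((deriv (deriv f) p.1 * (2 * f p.1) - deriv f p.1 * (2 * deriv f p.1))
              / (2 * f p.1)^2 + (deriv f p.1 / (2 * f p.1))^2)
        else 0 := by
    intro k
    unfold RE
    rw [pd_GamFn hf hpos, pd_GamFn hf hpos,
      Finset.sum_congr rfl (fun m _ => by
        rw [GamE_eq hfd hpos, GamE_eq hfd hpos, GamE_eq hfd hpos, GamE_eq hfd hpos]),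
      Finset.sum_sub_distrib, S1_eq, S2_eq, sub_zero]
    have hP2 : (if (k : ℕ) = 0 then deriv (fun u => Gam f u k i j) p.1 else 0) = 0 := by
      by_cases hk0 : (k : ℕ) = 0
      · rw [if_pos hk0, dGam_zero p.1 (by omega) (by omega)]
      · rw [if_neg hk0]
    rw [hP2, sub_zero]
    by_cases hjk : (j : ℕ) = 0 ∧ 2 ≤ (k : ℕ)
    · rw [dGam_alpha hf hpos p.1 (k := k) (i := k) (j := j) (by omega)
        (Or.inr ⟨hjk.1, rfl, hjk.2⟩)]
      split_ifs <;> first | omega | ring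
    · rw [dGam_zero p.1 (k := k) (i := k) (j := j) (by omega) (by omega)]
      split_ifs <;> first | omega | ring
  unfold RicE
  rw [Finset.sum_congr rfl (fun k _ => key k)]
  rw [sum_classes _ 0 0 (if (i : ℕ) = 0 ∧ (j : ℕ) = 0 then
        -((deriv (deriv f) p.1 * (2 * f p.1) - deriv f p.1 * (2 * deriv f p.1))
            / (2 * f p.1)^2 + (deriv f p.1 / (2 * f p.1))^2)
      else 0)
    (fun l hl => by rw [if_neg (by omega)])
    (fun l hl => by rw [if_neg (by omega)])
    (fun l hl => by split_ifs <;> first | rfl | omega)]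
  by_cases h : (i : ℕ) = 0 ∧ (j : ℕ) = 0
  · rw [if_pos h, if_pos h]
    unfold RicuuE
    field_simp
    ring
  · rw [if_neg h, if_neg h]
    ring

end ricci

section lie
variable {n : ℕ} {f : ℝ → ℝ}

lemma lieE_eq (hfd : Differentiable ℝ f) (X : Pt n → Fin (n+2) → ℝ) (p : Pt n)
    (i j : Fin (n+2)) :
    lieE f X p i j
      = (if i = j ∧ 2 ≤ (i : ℕ) then X p 0 * deriv f p.1 else 0)
        + (if 2 ≤ (j : ℕ) then f p.1 else 1) * pd i (fun q => X q (sig j)) p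
        + (if 2 ≤ (i : ℕ) then f p.1 else 1) * pd j (fun q => X q (sig i)) p := by
  unfold lieE
  rw [Finset.sum_congr rfl (fun k _ => by rw [pd_gE hfd]), Finset.sum_add_distrib,
    Finset.sum_add_distrib]
  congr 1
  · congr 1
    · by_cases h : i = j ∧ 2 ≤ (i : ℕ)
      · rw [sum_single _ 0 (fun l hl => by
          rw [if_pos h, if_neg (by exact fun e => hl (Fin.ext e)), mul_zero])]
        rw [if_pos h, if_pos h, if_pos (Fin.val_zero _)]
      · rw [sum_zero_all _ (fun l => by rw [if_neg h, mul_zero]), if_neg h]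
    · rw [sum_single _ (sig j) (fun l hl => by rw [gE_off' p l j hl, zero_mul]), gE_sig']
  · rw [sum_single _ (sig i) (fun l hl => by rw [gE_off p i l hl, zero_mul]), gE_sig]

end lie

section main
variable {n : ℕ} {f : ℝ → ℝ}

lemma sig_zero : sig (0 : Fin (n+2)) = 1 := by
  unfold sig; rw [if_pos (Fin.val_zero _)]

lemma sig_one : sig (1 : Fin (n+2)) = 0 := by
  unfold sig
  rw [if_neg (by rw [Fin.val_one]; omega), if_pos (Fin.val_one _)]

lemma sig_big {i : Fin (n+2)} (h : 2 ≤ (i : ℕ)) : sig i = i := by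
  unfold sig; rw [if_neg (by omega), if_neg (by omega)]

lemma gE_val (p : Pt n) (i j : Fin (n+2)) :
    gE f p i j = if ((i:ℕ) = 0 ∧ (j:ℕ) = 1) ∨ ((i:ℕ) = 1 ∧ (j:ℕ) = 0) then 1
      else if (i:ℕ) = (j:ℕ) ∧ 2 ≤ (i:ℕ) then f p.1 else 0 := by
  unfold gE
  simp only [Fin.ext_iff]

theorem egorov_soliton_system' (hf : ContDiff ℝ (⊤ : ℕ∞) f)
    (hpos : ∀ u, 0 < f u) (lam : ℝ)
    (X : Pt n → Fin (n + 2) → ℝ) :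
    (∀ (p : Pt n) (i j : Fin (n + 2)),
        lieE f X p i j + RicE f p i j = lam * gE f p i j) ↔
    ((∀ (p : Pt n) (i j : Fin (n + 2)), 2 ≤ (i : ℕ) → 2 ≤ (j : ℕ) → i ≠ j →
        pd i (fun q => X q j) p + pd j (fun q => X q i) p = 0) ∧
     (∀ (p : Pt n) (i : Fin (n + 2)), 2 ≤ (i : ℕ) →
        pd i (fun q => X q 1) p + f p.1 * pd 0 (fun q => X q i) p = 0) ∧
     (∀ (p : Pt n) (i : Fin (n + 2)), 2 ≤ (i : ℕ) →
        pd i (fun q => X q 0) p + f p.1 * pd 1 (fun q => X q i) p = 0) ∧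
     (∀ (p : Pt n) (i : Fin (n + 2)), 2 ≤ (i : ℕ) →
        X p 0 * deriv f p.1 + 2 * f p.1 * pd i (fun q => X q i) p = lam * f p.1) ∧
     (∀ p : Pt n, RicuuE n f p.1 + 2 * pd 0 (fun q => X q 1) p = 0) ∧
     (∀ p : Pt n, pd 0 (fun q => X q 0) p + pd 1 (fun q => X q 1) p = lam) ∧
     (∀ p : Pt n, pd 1 (fun q => X q 0) p = 0)) := by
  have hfd := hf.differentiable (by simp)
  have h0v : ((0 : Fin (n+2)) : ℕ) = 0 := Fin.val_zero _
  have h1v : ((1 : Fin (n+2)) : ℕ) = 1 := Fin.val_one _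
  constructor
  · intro h
    refine ⟨?_, ?_, ?_, ?_, ?_, ?_, ?_⟩
    · intro p i j hi hj hij
      have hijv : (i : ℕ) ≠ (j : ℕ) := val_ne_of_ne hij
      have hfne : f p.1 ≠ 0 := ne_of_gt (hpos p.1)
      have e := h p i j
      rw [lieE_eq hfd, RicE_eq hf hpos, gE_val, sig_big hi, sig_big hj] at e
      simp only [Fin.ext_iff, h0v, h1v] at e
      have e2 : f p.1 * (pd i (fun q => X q j) p + pd j (fun q => X q i) p) = 0 := by
        split_ifs at e <;> first | omega | linarith | tauto
      rcases mul_eq_zero.mp e2 with h' | h'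
      · exact absurd h' hfne
      · exact h'
    · intro p i hi
      have e := h p 0 i
      rw [lieE_eq hfd, RicE_eq hf hpos, gE_val, sig_big hi, sig_zero] at e
      simp only [Fin.ext_iff, h0v, h1v] at e
      split_ifs at e <;> first | omega | linarith | tauto
    · intro p i hi
      have e := h p 1 i
      rw [lieE_eq hfd, RicE_eq hf hpos, gE_val, sig_big hi, sig_one] at e
      simp only [Fin.ext_iff, h0v, h1v] at e
      split_ifs at e <;> first | omega | linarith | tauto
    · intro p i hi
      have e := h p i i
      rw [lieE_eq hfd, RicE_eq hf hpos, gE_val, sig_big hi] at e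
      simp only [Fin.ext_iff, h0v, h1v] at e
      split_ifs at e <;> first | omega | linarith | tauto
    · intro p
      have e := h p 0 0
      rw [lieE_eq hfd, RicE_eq hf hpos, gE_val, sig_zero] at e
      simp only [Fin.ext_iff, h0v, h1v] at e
      split_ifs at e <;> first | omega | linarith | tauto
    · intro p
      have e := h p 0 1
      rw [lieE_eq hfd, RicE_eq hf hpos, gE_val, sig_zero, sig_one] at e
      simp only [Fin.ext_iff, h0v, h1v] at e
      split_ifs at e <;> first | omega | linarith | tauto
    · intro p
      have e := h p 1 1
      rw [lieE_eq hfd, RicE_eq hf hpos, gE_val, sig_one] at e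
      simp only [Fin.ext_iff, h0v, h1v] at e
      split_ifs at e <;> first | omega | linarith | tauto
  · rintro ⟨h1, h2, h3, h4, h5, h6, h7⟩ p i j
    have hfne : f p.1 ≠ 0 := ne_of_gt (hpos p.1)
    rw [lieE_eq hfd, RicE_eq hf hpos, gE_val]
    obtain hi0 | hi1 | hi2 : (i : ℕ) = 0 ∨ (i : ℕ) = 1 ∨ 2 ≤ (i : ℕ) := by omega
    · have : i = 0 := Fin.ext (by rw [hi0, h0v])
      subst this
      obtain hj0 | hj1 | hj2 : (j : ℕ) = 0 ∨ (j : ℕ) = 1 ∨ 2 ≤ (j : ℕ) := by omega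
      · have : j = 0 := Fin.ext (by rw [hj0, h0v]); subst this
        rw [sig_zero]
        simp only [Fin.ext_iff, h0v, h1v]
        have := h5 p
        split_ifs <;> first | omega | linarith | tauto
      · have : j = 1 := Fin.ext (by rw [hj1, h1v]); subst this
        rw [sig_zero, sig_one]
        simp only [Fin.ext_iff, h0v, h1v]
        have := h6 p
        split_ifs <;> first | omega | linarith | tauto
      · rw [sig_zero, sig_big hj2]
        simp only [Fin.ext_iff, h0v, h1v]
        have := h2 p j hj2
        split_ifs <;> first | omega | linarith | tauto
    · have : i = 1 := Fin.ext (by rw [hi1, h1v])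
      subst this
      obtain hj0 | hj1 | hj2 : (j : ℕ) = 0 ∨ (j : ℕ) = 1 ∨ 2 ≤ (j : ℕ) := by omega
      · have : j = 0 := Fin.ext (by rw [hj0, h0v]); subst this
        rw [sig_zero, sig_one]
        simp only [Fin.ext_iff, h0v, h1v]
        have := h6 p
        split_ifs <;> first | omega | linarith | tauto
      · have : j = 1 := Fin.ext (by rw [hj1, h1v]); subst this
        rw [sig_one]
        simp only [Fin.ext_iff, h0v, h1v]
        have := h7 p
        split_ifs <;> first | omega | linarith | tauto
      · rw [sig_one, sig_big hj2]
        simp only [Fin.ext_iff, h0v, h1v]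
        have := h3 p j hj2
        split_ifs <;> first | omega | linarith | tauto
    · obtain hj0 | hj1 | hj2 : (j : ℕ) = 0 ∨ (j : ℕ) = 1 ∨ 2 ≤ (j : ℕ) := by omega
      · have : j = 0 := Fin.ext (by rw [hj0, h0v]); subst this
        rw [sig_zero, sig_big hi2]
        simp only [Fin.ext_iff, h0v, h1v]
        have := h2 p i hi2
        split_ifs <;> first | omega | linarith | tauto
      · have : j = 1 := Fin.ext (by rw [hj1, h1v]); subst this
        rw [sig_one, sig_big hi2]
        simp only [Fin.ext_iff, h0v, h1v]
        have := h3 p i hi2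
        split_ifs <;> first | omega | linarith | tauto
      · by_cases hij : i = j
        · subst hij
          rw [sig_big hi2]
          simp only [Fin.ext_iff, h0v, h1v]
          have := h4 p i hi2
          split_ifs <;> first | omega | linarith | tauto
        · have hijv : (i : ℕ) ≠ (j : ℕ) := val_ne_of_ne hij
          rw [sig_big hi2, sig_big hj2]
          simp only [Fin.ext_iff, h0v, h1v]
          have e := h1 p i j hi2 hj2 hij
          have e2 : f p.1 * (pd i (fun q => X q j) p + pd j (fun q => X q i) p)
              = f p.1 * 0 := by rw [e]
          rw [mul_zero] at e2
          split_ifs <;> first | omega | linarith | tauto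
end main
/-- a vector field `X` on an Egorov space satisfies the Ricci soliton
equation `L_X g_f + Ric = λ g_f` if and only if its components satisfy the system
\eqref{syssoliego} of the paper. -/
theorem egorov_soliton_system {n : ℕ} (f : ℝ → ℝ) (hf : ContDiff ℝ (⊤ : ℕ∞) f)
    (hpos : ∀ u, 0 < f u) (lam : ℝ)
    (X : Pt n → Fin (n + 2) → ℝ) (hX : ∀ k, ContDiff ℝ (⊤ : ℕ∞) (fun p => X p k)) :
    (∀ (p : Pt n) (i j : Fin (n + 2)),
        lieE f X p i j + RicE f p i j = lam * gE f p i j) ↔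
    ((∀ (p : Pt n) (i j : Fin (n + 2)), 2 ≤ (i : ℕ) → 2 ≤ (j : ℕ) → i ≠ j →
        pd i (fun q => X q j) p + pd j (fun q => X q i) p = 0) ∧
     (∀ (p : Pt n) (i : Fin (n + 2)), 2 ≤ (i : ℕ) →
        pd i (fun q => X q 1) p + f p.1 * pd 0 (fun q => X q i) p = 0) ∧
     (∀ (p : Pt n) (i : Fin (n + 2)), 2 ≤ (i : ℕ) →
        pd i (fun q => X q 0) p + f p.1 * pd 1 (fun q => X q i) p = 0) ∧
     (∀ (p : Pt n) (i : Fin (n + 2)), 2 ≤ (i : ℕ) →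
        X p 0 * deriv f p.1 + 2 * f p.1 * pd i (fun q => X q i) p = lam * f p.1) ∧
     (∀ p : Pt n, RicuuE n f p.1 + 2 * pd 0 (fun q => X q 1) p = 0) ∧
     (∀ p : Pt n, pd 0 (fun q => X q 0) p + pd 1 (fun q => X q 1) p = lam) ∧
     (∀ p : Pt n, pd 1 (fun q => X q 0) p = 0)) := by
  exact egorov_soliton_system' hf hpos lam X
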